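/- arXiv:1809.00518 — 2 statements merged into one kernel-verified Lean document; each statement's English description precedes it below -/
import Mathlib

section
/- For any E ⊆ ℝ₊, the Lebesgue measure of E ∩ [1, 2^n] is at most the cardinality of pix(E ∩ [1,2^n]) plus a constant; consequently the logarithmic density of E is at most the pixel density of E: Den_log E ≤ Den_pix E. -/
open MeasureTheory Filter Set
open scoped ENNReal

noncomputable section

/-- The pixel set of `E`: integers at distance at most one from `E`. -/
def pix (E : Set ℝ) : Set ℕ := { k : ℕ | ∃ x ∈ E, |(k : ℝ) - x| ≤ 1 }

/-- The logarithmic density of `E`. -/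
def DenLog (E : Set ℝ) : ℝ :=
  limsup (fun n : ℕ => Real.logb 2 (volume (E ∩ Icc 1 ((2:ℝ)^n))).toReal / n) atTop

/-- The pixel density of `E`. -/
def DenPix (E : Set ℝ) : ℝ :=
  limsup (fun n : ℕ => Real.logb 2 ((pix (E ∩ Icc 1 ((2:ℝ)^n))).ncard : ℝ) / n) atTop

lemma div_le_div_of_le_left' {a b : ℝ} (h : a ≤ b) (c : ℝ) (hc : 0 ≤ c := by positivity) :
    a / c ≤ b / c := by
  exact div_le_div_of_nonneg_right h hc

lemma pix_subset_Iic (E : Set ℝ) (n : ℕ) :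
    pix (E ∩ Icc 1 ((2:ℝ)^n)) ⊆ Set.Iic (2^n + 1) := by
  rintro k ⟨x, ⟨_, _, hx2⟩, hk⟩
  rw [abs_le] at hk
  have h : (k : ℝ) ≤ ((2^n + 1 : ℕ) : ℝ) := by push_cast; linarith [hk.2]
  exact_mod_cast h

lemma pix_finite (E : Set ℝ) (n : ℕ) : (pix (E ∩ Icc 1 ((2:ℝ)^n))).Finite :=
  (Set.finite_Iic _).subset (pix_subset_Iic E n)

lemma key_vol (E : Set ℝ) (n : ℕ) :
    volume (E ∩ Icc 1 ((2:ℝ)^n)) ≤ ((pix (E ∩ Icc 1 ((2:ℝ)^n))).ncard : ℝ≥0∞) := by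
  set S := E ∩ Icc 1 ((2:ℝ)^n) with hS
  have hfin := pix_finite E n
  have hcover : S ⊆ ⋃ k ∈ hfin.toFinset, Ico (k : ℝ) (k + 1) := by
    intro x hx
    have hx1 : (1:ℝ) ≤ x := hx.2.1
    have hx0 : (0:ℝ) ≤ x := le_trans zero_le_one hx1
    have hfl := Nat.floor_le hx0
    have hlt := Nat.lt_floor_add_one x
    refine mem_iUnion₂.2 ⟨⌊x⌋₊, ?_, ⟨hfl, hlt⟩⟩
    rw [hfin.mem_toFinset]
    exact ⟨x, hx, by rw [abs_le]; constructor <;> linarith⟩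
  calc volume S ≤ volume (⋃ k ∈ hfin.toFinset, Ico (k : ℝ) (k + 1)) := measure_mono hcover
    _ ≤ ∑ k ∈ hfin.toFinset, volume (Ico (k : ℝ) (k + 1)) := measure_biUnion_finset_le _ _
    _ = hfin.toFinset.card := by simp [Real.volume_Ico]
    _ = ((pix S).ncard : ℝ≥0∞) := by
        rw [Set.ncard_eq_toFinset_card (pix S) hfin]

lemma key_vol_real (E : Set ℝ) (n : ℕ) :
    (volume (E ∩ Icc 1 ((2:ℝ)^n))).toReal ≤ ((pix (E ∩ Icc 1 ((2:ℝ)^n))).ncard : ℝ) := by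
  have h := ENNReal.toReal_mono (by simp) (key_vol E n)
  simpa using h

lemma pix_ncard_le (E : Set ℝ) (n : ℕ) :
    (pix (E ∩ Icc 1 ((2:ℝ)^n))).ncard ≤ 2^(n+2) := by
  have h1 : (pix (E ∩ Icc 1 ((2:ℝ)^n))).ncard ≤ (Set.Iic (2^n + 1) : Set ℕ).ncard :=
    Set.ncard_le_ncard (pix_subset_Iic E n) (Set.finite_Iic _)
  have h2 : (Set.Iic (2^n + 1) : Set ℕ).ncard = 2^n + 2 := by
    rw [← Finset.coe_Iic, Set.ncard_coe_finset, Nat.card_Iic]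
  rw [h2] at h1
  have h3 : (1:ℕ) ≤ 2^n := Nat.one_le_two_pow
  calc (pix (E ∩ Icc 1 ((2:ℝ)^n))).ncard ≤ 2^n + 2 := h1
    _ ≤ 2^(n+2) := by
        have : 2^(n+2) = 2^n + 3 * 2^n := by ring
        omega

theorem leb_le_pix_and_denlog_le_denpix (E : Set ℝ) (hE : E ⊆ Ici 0) :
    (∃ C : ℝ, ∀ n : ℕ,
      (volume (E ∩ Icc 1 ((2:ℝ)^n))).toReal ≤ ((pix (E ∩ Icc 1 ((2:ℝ)^n))).ncard : ℝ) + C) ∧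
    DenLog E ≤ DenPix E := by
  set f : ℕ → ℝ := fun n => Real.logb 2 (volume (E ∩ Icc 1 ((2:ℝ)^n))).toReal / n with hf
  set g : ℕ → ℝ := fun n => Real.logb 2 ((pix (E ∩ Icc 1 ((2:ℝ)^n))).ncard : ℝ) / n with hg
  -- pointwise nonnegativity of g
  have hg0 : ∀ n, 0 ≤ g n := by
    intro n
    apply div_nonneg _ (Nat.cast_nonneg n)
    rcases Nat.eq_zero_or_pos (pix (E ∩ Icc 1 ((2:ℝ)^n))).ncard with h | h
    · simp [hg, h]
    · exact Real.logb_nonneg one_lt_two (by exact_mod_cast h)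
  -- pointwise comparison f ≤ g
  have hfg : ∀ n, f n ≤ g n := by
    intro n
    have hlog : Real.logb 2 (volume (E ∩ Icc 1 ((2:ℝ)^n))).toReal ≤
        Real.logb 2 ((pix (E ∩ Icc 1 ((2:ℝ)^n))).ncard : ℝ) := by
      rcases eq_or_lt_of_le (ENNReal.toReal_nonneg :
          (0:ℝ) ≤ (volume (E ∩ Icc 1 ((2:ℝ)^n))).toReal) with h0 | h0
      · rw [← h0, Real.logb_zero]
        rcases Nat.eq_zero_or_pos (pix (E ∩ Icc 1 ((2:ℝ)^n))).ncard with h | h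
        · simp [h]
        · exact Real.logb_nonneg one_lt_two (by exact_mod_cast h)
      · exact Real.logb_le_logb_of_le one_lt_two h0 (key_vol_real E n)
    exact div_le_div_of_le_left' hlog (n:ℝ)
  -- g is bounded above by 3 eventually
  have hgb : ∀ n : ℕ, 1 ≤ n → g n ≤ 3 := by
    intro n hn
    have hcard := pix_ncard_le E n
    have hlog : Real.logb 2 ((pix (E ∩ Icc 1 ((2:ℝ)^n))).ncard : ℝ) ≤ (n + 2 : ℝ) := by
      rcases Nat.eq_zero_or_pos (pix (E ∩ Icc 1 ((2:ℝ)^n))).ncard with h | h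
      · rw [h]; push_cast; rw [Real.logb_zero]; positivity
      · calc Real.logb 2 ((pix (E ∩ Icc 1 ((2:ℝ)^n))).ncard : ℝ)
            ≤ Real.logb 2 ((2:ℝ)^(n+2)) := by
              apply Real.logb_le_logb_of_le one_lt_two (by exact_mod_cast h)
              exact_mod_cast hcard
          _ = (n + 2 : ℝ) := by
              rw [Real.logb_pow, Real.logb_self_eq_one (by norm_num)]
              push_cast; ring
    have hnpos : (0:ℝ) < n := by exact_mod_cast hn
    have hgn : g n ≤ (n + 2 : ℝ) / n :=
      div_le_div_of_le_left' hlog (n:ℝ)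
    refine hgn.trans ?_
    rw [div_le_iff₀ hnpos]
    have hn' : (1:ℝ) ≤ n := by exact_mod_cast hn
    nlinarith
  have hgbdd : IsBoundedUnder (· ≤ ·) atTop g :=
    ⟨3, eventually_map.2 (eventually_atTop.2 ⟨1, hgb⟩)⟩
  constructor
  · exact ⟨0, fun n => by simpa using key_vol_real E n⟩
  · show limsup f atTop ≤ limsup g atTop
    by_cases hc : IsCoboundedUnder (· ≤ ·) atTop f
    · exact limsup_le_limsup (Eventually.of_forall hfg) hc hgbdd
    · have hf0 : limsup f atTop = 0 := by
        rw [limsup_eq]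
        apply Real.sInf_of_not_bddBelow
        rintro ⟨b, hb⟩
        exact hc ⟨b, fun a ha => hb (eventually_map.1 ha)⟩
      rw [hf0]
      exact le_limsup_of_frequently_le (Frequently.of_forall hg0) hgbdd
end
end

section
/- Let (Y_n)_{n≥1} be nonnegative random variables all having the same distribution as a fixed nonnegative random variable Y_0 with P(Y_0 > 0) > 0. Then P(Σ_{n≥1} Y_n = +∞) ≥ P(Y_0 > 0) > 0. -/
/-!
For `ε > 0` the events `{ε < Y n}` all have probability `P(ε < Y₀)`, so by continuity from above
their limsup has probability at least `P(ε < Y₀)`. On that limsup infinitely many terms exceed `ε`,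
so the series diverges. Letting `ε ↓ 0` gives `P(0 < Y₀) ≤ P(∑ Y n = ∞)`.
-/

open MeasureTheory Filter Set

section

variable {α : Type*} {m : MeasurableSpace α} {μ : Measure α}

theorem le_measure_limsup_atTop_of_forall_le [IsFiniteMeasure μ] {s : ℕ → Set α}
    (hs : ∀ n, NullMeasurableSet (s n) μ) {c : ENNReal} (hc : ∀ n, c ≤ μ (s n)) :
    c ≤ μ (limsup s atTop) := by
  have hanti : Antitone fun n => ⋃ i ≥ n, s i :=
    fun _ _ hnm => biUnion_mono (fun _ hi => le_trans hnm hi) fun _ _ => subset_rfl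
  simp only [limsup_eq_iInf_iSup_of_nat, iInf_eq_iInter, iSup_eq_iUnion]
  rw [hanti.measure_iInter
    (fun n => .biUnion (to_countable _) fun i _ => hs i) ⟨0, measure_ne_top _ _⟩]
  exact le_iInf fun n =>
    (hc n).trans (measure_mono (subset_iUnion₂_of_subset n le_rfl subset_rfl))

theorem measure_setOf_pos_le_of_forall {f : α → ℝ} {c : ENNReal}
    (hc : ∀ ε > 0, μ {x | ε < f x} ≤ c) : μ {x | 0 < f x} ≤ c := by
  have hunion : {x | 0 < f x} = ⋃ n : ℕ, {x | 1 / ((n : ℝ) + 1) < f x} := by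
    ext x
    simp only [mem_ofPred_eq, mem_iUnion]
    exact ⟨fun h => exists_nat_one_div_lt h, fun ⟨n, hn⟩ => lt_trans Nat.one_div_pos_of_nat hn⟩
  have hmono : Monotone fun n : ℕ => {x | 1 / ((n : ℝ) + 1) < f x} :=
    fun _ _ hkl x (hx : _ < f x) => lt_of_le_of_lt (Nat.one_div_le_one_div hkl) hx
  rw [hunion, hmono.measure_iUnion]
  exact iSup_le fun n => hc _ Nat.one_div_pos_of_nat

end

theorem ENNReal.tsum_ofReal_eq_top_of_frequently_lt {a : ℕ → ℝ} {ε : ℝ} (hε : 0 < ε)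
    (h : ∃ᶠ n in atTop, ε < a n) : ∑' n, ENNReal.ofReal (a n) = ⊤ := by
  by_contra hfin
  have hsmall : ∀ᶠ n in atTop, ENNReal.ofReal (a n) < ENNReal.ofReal ε :=
    (ENNReal.tendsto_atTop_zero_of_tsum_ne_top hfin).eventually_lt_const
      (ENNReal.ofReal_pos.mpr hε)
  obtain ⟨n, hlt, hsm⟩ := (h.and_eventually hsmall).exists
  exact hsm.not_ge (ENNReal.ofReal_le_ofReal hlt.le)

theorem limsup_setOf_lt_subset_tsum_ofReal_eq_top {Ω : Type*} (Y : ℕ → Ω → ℝ) {ε : ℝ}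
    (hε : 0 < ε) :
    limsup (fun n => {ω | ε < Y n ω}) atTop ⊆ {ω | ∑' n, ENNReal.ofReal (Y n ω) = ⊤} :=
  fun _ hω => ENNReal.tsum_ofReal_eq_top_of_frequently_lt hε (mem_limsup_iff_frequently_mem.mp hω)

theorem divergence_of_identically_distributed_general {Ω : Type*} [MeasurableSpace Ω]
    (P : Measure Ω) [IsProbabilityMeasure P]
    (Y : ℕ → Ω → ℝ) (Y₀ : Ω → ℝ)
    (hmeas : ∀ n, Measurable (Y n)) (hmeas₀ : Measurable Y₀)
    (hid : ∀ n, P.map (Y n) = P.map Y₀)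
    (h0 : 0 < P {ω | 0 < Y₀ ω}) :
    P {ω | 0 < Y₀ ω} ≤ P {ω | ∑' n : ℕ, ENNReal.ofReal (Y n ω) = ⊤} ∧
    0 < P {ω | ∑' n : ℕ, ENNReal.ofReal (Y n ω) = ⊤} := by
  have hle : P {ω | 0 < Y₀ ω} ≤ P {ω | ∑' n : ℕ, ENNReal.ofReal (Y n ω) = ⊤} := by
    refine measure_setOf_pos_le_of_forall fun ε hε => ?_
    have hlaw : ∀ n, P {ω | ε < Y n ω} = P {ω | ε < Y₀ ω} := fun n =>
      ProbabilityTheory.IdentDistrib.measure_mem_eq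
        ⟨(hmeas n).aemeasurable, hmeas₀.aemeasurable, hid n⟩ measurableSet_Ioi
    calc P {ω | ε < Y₀ ω}
        ≤ P (limsup (fun n => {ω | ε < Y n ω}) atTop) :=
          le_measure_limsup_atTop_of_forall_le
            (fun n => (measurableSet_lt measurable_const (hmeas n)).nullMeasurableSet)
            fun n => (hlaw n).ge
      _ ≤ _ := measure_mono (limsup_setOf_lt_subset_tsum_ofReal_eq_top Y hε)
  exact ⟨hle, h0.trans_le hle⟩

/-- Jeulin-type lemma: identically distributed nonnegative random variables whose common law
charges `(0,∞)` have a divergent series with probability at least `P(Y₀ > 0) > 0`. -/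
theorem divergence_of_identically_distributed {Ω : Type*} [MeasurableSpace Ω]
    (P : Measure Ω) [IsProbabilityMeasure P]
    (Y : ℕ → Ω → ℝ) (Y₀ : Ω → ℝ)
    (hmeas : ∀ n, Measurable (Y n)) (hmeas₀ : Measurable Y₀)
    (hpos : ∀ n ω, 0 ≤ Y n ω) (hpos₀ : ∀ ω, 0 ≤ Y₀ ω)
    (hid : ∀ n, P.map (Y n) = P.map Y₀)
    (h0 : 0 < P {ω | 0 < Y₀ ω}) :
    P {ω | 0 < Y₀ ω} ≤ P {ω | ∑' n : ℕ, ENNReal.ofReal (Y n ω) = ⊤} ∧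
    0 < P {ω | ∑' n : ℕ, ENNReal.ofReal (Y n ω) = ⊤} :=
  divergence_of_identically_distributed_general P Y Y₀ hmeas hmeas₀ hid h0
end
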